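/- Let (K, v) be a separably closed valued field of characteristic p > 0 with valuation ring O and value group Γ = v(K^×). Let a_0, …, a_e ∈ O with a_0 ≠ 0 and min_i v(a_i) = 0, let b_1, b_2 ∈ K, and let μ_1, μ_2 ∈ Γ. Then there exists u ∈ K with v(u^p − b_1) ≥ μ_1 and v(∑_{i=0}^{e} a_i·u^{p^i} − b_2) ≥ μ_2 if and only if v(∑_{i=0}^{e} a_i^p·b_1^{p^i} − b_2^p) ≥ min( min_{i : a_i ≠ 0} (p^i·μ_1 + p·v(a_i)), p·μ_2 ). -/

import Mathlib

/-!
Write `L u = ∑ aᵢ u^(pⁱ)` and `M w = ∑ aᵢ^p w^(pⁱ)`. In characteristic `p`, `M` is additive and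
`(L u)^p = M (u^p)`, so necessity is the ultrametric inequality applied to
`M b₁ - b₂^p = (L u - b₂)^p - M (u^p - b₁)`.

For sufficiency, first move `b₁` to `w = b₁ + η` with `v (M w - b₂^p) ≥ p μ₂`, where `η` is a root
of `M X = b₂^p - M b₁`. This polynomial is separable (its derivative is the constant `a₀^p`), hence
splits, and Vieta's formulas show that if all its roots had valuation `< μ₁`, then
`v (constant term) < pⁱ μ₁ + v (coefficient of X^(pⁱ))` for every `i`, against the hypothesis.
Then replace `w` by a `p`-th power `z^p` close enough to it, which exists because the separable
polynomial `X^p + d X - w` has a root for every `d`, and take `u = z`.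
-/

/-- A valuation on a field `K` with values in the linearly ordered abelian group `Γ`
(together with `∞ = ⊤`), surjective onto `Γ`, i.e. `Γ = v(K^×)`. -/
structure ValuedFieldAux (K : Type*) [Field K] (Γ : Type*)
    [AddCommGroup Γ] [LinearOrder Γ] [IsOrderedAddMonoid Γ] where
  v : K → WithTop Γ
  v_eq_top_iff : ∀ x : K, v x = ⊤ ↔ x = 0
  v_mul : ∀ x y : K, v (x * y) = v x + v y
  v_add : ∀ x y : K, min (v x) (v y) ≤ v (x + y)
  v_surj : ∀ γ : Γ, ∃ x : K, v x = (γ : WithTop Γ)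

open Finset Polynomial

namespace ValuedFieldAux

variable {K : Type*} [Field K] {Γ : Type*} [AddCommGroup Γ] [LinearOrder Γ] [IsOrderedAddMonoid Γ]

lemma v_one (vf : ValuedFieldAux K Γ) : vf.v 1 = 0 := by
  obtain ⟨g, hg⟩ := WithTop.ne_top_iff_exists.1 (mt (vf.v_eq_top_iff 1).1 one_ne_zero)
  have h := vf.v_mul 1 1
  rw [one_mul, ← hg, ← WithTop.coe_add, WithTop.coe_eq_coe, left_eq_add] at h
  rw [← hg, h, WithTop.coe_zero]

def toAddValuation (vf : ValuedFieldAux K Γ) : AddValuation K (WithTop Γ) :=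
  AddValuation.of vf.v ((vf.v_eq_top_iff 0).2 rfl) vf.v_one vf.v_add vf.v_mul

end ValuedFieldAux

lemma WithTop.coe_le_of_nsmul_le_nsmul {Γ : Type*} [AddCommGroup Γ] [LinearOrder Γ]
    [IsOrderedAddMonoid Γ] {n : ℕ} (hn : n ≠ 0) {γ : Γ} {x : WithTop Γ}
    (h : n • (γ : WithTop Γ) ≤ n • x) : (γ : WithTop Γ) ≤ x := by
  induction x using WithTop.recTopCoe with
  | top => exact le_top
  | coe x =>
    rw [← WithTop.coe_nsmul, ← WithTop.coe_nsmul, WithTop.coe_le_coe] at h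
    exact WithTop.coe_le_coe.2 (le_of_nsmul_le_nsmul_right hn h)

namespace AddValuation

variable {Γ : Type*} [AddCommGroup Γ] [LinearOrder Γ] [IsOrderedAddMonoid Γ]

section CommRing

variable {R : Type*} [CommRing R] (v : AddValuation R (WithTop Γ))

lemma map_le_multiset_sum {s : Multiset R} {g : WithTop Γ} (h : ∀ x ∈ s, g ≤ v x) :
    g ≤ v s.sum :=
  Multiset.sum_induction (fun x => g ≤ v x) s (fun _ _ => v.map_le_add) (by simp) h

lemma map_multiset_prod_lt_card_nsmul {s : Multiset R} (hs : s ≠ 0) {μ : Γ}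
    (h : ∀ x ∈ s, v x < μ) : v s.prod < Multiset.card s • (μ : WithTop Γ) := by
  induction s using Multiset.induction with
  | empty => exact absurd rfl hs
  | cons x s ih =>
    have hx : v x < μ := h x (Multiset.mem_cons_self x s)
    rw [Multiset.prod_cons, v.map_mul, Multiset.card_cons, succ_nsmul']
    rcases eq_or_ne s 0 with rfl | hs
    · simpa using hx
    calc v x + v s.prod < v x + Multiset.card s • (μ : WithTop Γ) :=
          WithTop.add_lt_add_left hx.ne_top (ih hs fun y hy => h y (Multiset.mem_cons_of_mem hy))
      _ ≤ μ + Multiset.card s • (μ : WithTop Γ) := by gcongr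

lemma map_prod_lt_nsmul_add_map_esymm {s : Multiset R} {μ : Γ}
    (hμ : ∀ x ∈ s, v x < μ) {k : ℕ} (hk : 0 < k) (hks : k ≤ Multiset.card s) :
    v s.prod < k • (μ : WithTop Γ) + v (s.esymm (Multiset.card s - k)) := by
  classical
  have hsubsets : s.powersetCard (Multiset.card s - k) ≠ 0 := by
    rw [← Multiset.card_pos, Multiset.card_powersetCard]
    exact Nat.choose_pos (Nat.sub_le _ _)
  obtain ⟨t, ht, hmin⟩ := Multiset.exists_min_image (fun t => v t.prod) hsubsets
  obtain ⟨hts, htcard⟩ := Multiset.mem_powersetCard.1 ht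
  have hcard : Multiset.card (s - t) = k := by rw [Multiset.card_sub hts, htcard]; omega
  have hrest : v (s - t).prod < k • (μ : WithTop Γ) := by
    rw [← hcard]
    refine v.map_multiset_prod_lt_card_nsmul ?_ fun x hx =>
      hμ x (Multiset.mem_of_le tsub_le_self hx)
    rw [← Multiset.card_pos, hcard]
    exact hk
  have ht0 : v t.prod ≠ ⊤ := by
    rcases eq_or_ne t 0 with rfl | ht
    · simp
    exact (v.map_multiset_prod_lt_card_nsmul ht fun x hx => hμ x (Multiset.mem_of_le hts hx)).ne_top
  have hesymm : v t.prod ≤ v (s.esymm (Multiset.card s - k)) :=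
    v.map_le_multiset_sum fun x hx => by
      obtain ⟨t', ht', rfl⟩ := Multiset.mem_map.1 hx
      exact hmin t' ht'
  calc v s.prod = v t.prod + v (s - t).prod := by
        rw [← v.map_mul, ← Multiset.prod_add, add_tsub_cancel_of_le hts]
    _ < v t.prod + k • (μ : WithTop Γ) := WithTop.add_lt_add_left ht0 hrest
    _ ≤ v (s.esymm (Multiset.card s - k)) + k • (μ : WithTop Γ) := by gcongr
    _ = _ := add_comm _ _

lemma min_zero_map_pow_add_mul_le {n : ℕ} (hn : 1 < n) {d : R} (hd : 0 ≤ v d) (z : R) :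
    min 0 (v (z ^ n + d * z)) ≤ v z := by
  rcases le_or_gt 0 (v z) with hz | hz
  · exact min_le_of_left_le hz
  have hpow : v (z ^ n) < v z := by
    rw [v.map_pow]
    lift v z to Γ using hz.ne_top with ζ
    have := nsmul_lt_nsmul_left (neg_pos.2 (WithTop.coe_lt_coe.1 hz)) hn
    rw [smul_neg, smul_neg, neg_lt_neg_iff, one_nsmul] at this
    exact_mod_cast this
  have hlt : v (z ^ n) < v (d * z) := by
    rw [v.map_mul]
    exact hpow.trans_le (le_add_of_nonneg_left hd)
  exact min_le_of_right_le (by rw [v.map_add_eq_of_lt_left hlt]; exact hpow.le)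

end CommRing

variable {K : Type*} [Field K] (v : AddValuation K (WithTop Γ))

lemma exists_mem_roots_le_map_of_splits {F : K[X]} (hF : F.Splits) (h0 : F.coeff 0 ≠ 0) {k : ℕ}
    (hk : 0 < k) {μ : Γ} (h : k • (μ : WithTop Γ) + v (F.coeff k) ≤ v (F.coeff 0)) :
    ∃ x ∈ F.roots, (μ : WithTop Γ) ≤ v x := by
  by_contra! hlt
  have hF0 : F ≠ 0 := by rintro rfl; exact h0 rfl
  have hkF : k ≤ F.natDegree := by
    by_contra! hkF
    rw [coeff_eq_zero_of_natDegree_lt hkF, v.map_zero, add_top, top_le_iff, v.top_iff] at h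
    exact h0 h
  have hlead : v F.leadingCoeff ≠ ⊤ := (v.ne_top_iff).2 (leadingCoeff_ne_zero.2 hF0)
  have hcard := hF.natDegree_eq_card_roots
  rw [coeff_eq_esymm_roots_of_splits hF hkF, hF.coeff_zero_eq_leadingCoeff_mul_prod_roots] at h
  simp only [v.map_mul, v.map_pow, v.map_neg, v.map_one, nsmul_zero, add_zero, zero_add] at h
  have hprod := v.map_prod_lt_nsmul_add_map_esymm hlt hk (hcard ▸ hkF)
  rw [← hcard] at hprod
  have hcontra := WithTop.add_lt_add_left hlead hprod
  rw [add_left_comm] at hcontra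
  exact hcontra.not_ge h

lemma exists_le_map_pow_sub {p : ℕ} [CharP K p] [IsSepClosed K] (hp : p.Prime)
    (hv : ∀ γ : Γ, ∃ x, v x = γ) (c : K) (N : Γ) : ∃ z, (N : WithTop Γ) ≤ v (z ^ p - c) := by
  obtain ⟨m, hm⟩ : ∃ m : Γ, (m : WithTop Γ) = min 0 (v c) :=
    WithTop.ne_top_iff_exists.1 ((min_le_left _ _).trans_lt (WithTop.coe_lt_top 0)).ne
  -- a root `z` of `X^p + d X - c` has `v z ≥ m`, and `z^p - c = -d z`
  obtain ⟨d, hd⟩ := hv (max 0 (N - m))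
  have hd0 : d ≠ 0 := by
    rintro rfl
    rw [v.map_zero] at hd
    exact WithTop.top_ne_coe hd
  obtain ⟨z, hz⟩ := IsSepClosed.exists_root_C_mul_X_pow_add_C_mul_X_add_C' p p 1 d (-c) dvd_rfl
    hp.two_le hd0
  have hmz : (m : WithTop Γ) ≤ v z := by
    have := v.min_zero_map_pow_add_mul_le hp.one_lt (d := d)
      (by rw [hd]; exact WithTop.coe_le_coe.2 (le_max_left _ _)) z
    rwa [show z ^ p + d * z = c by linear_combination hz, ← hm] at this
  refine ⟨z, ?_⟩
  rw [show z ^ p - c = -(d * z) by linear_combination hz, v.map_neg, v.map_mul, hd]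
  calc (N : WithTop Γ) ≤ ((max 0 (N - m) + m : Γ) : WithTop Γ) :=
        WithTop.coe_le_coe.2 (sub_le_iff_le_add.1 (le_max_right _ _))
    _ ≤ _ := by rw [WithTop.coe_add]; gcongr

end AddValuation

section Linearized

variable {K : Type*} [Field K] (p e : ℕ) (a : ℕ → K)

/-- `x · r` for the skew polynomial `r = ∑ aᵢ tⁱ`, with `t` acting on `K` as the Frobenius. -/
def linearized (x : K) : K := ∑ i ∈ range (e + 1), a i * x ^ p ^ i

noncomputable def linearizedPoly : K[X] := ∑ i ∈ range (e + 1), C (a i) * X ^ p ^ i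

lemma eval_linearizedPoly (x : K) : (linearizedPoly p e a).eval x = linearized p e a x := by
  simp [linearizedPoly, linearized, eval_finsetSum]

variable {p}

lemma linearized_zero (hp : p ≠ 0) : linearized p e a 0 = 0 := by
  simp [linearized, hp]

lemma linearized_add [Fact p.Prime] [CharP K p] (x y : K) :
    linearized p e a (x + y) = linearized p e a x + linearized p e a y := by
  simp only [linearized, ← sum_add_distrib, add_pow_char_pow, mul_add]

lemma linearized_sub [Fact p.Prime] [CharP K p] (x y : K) :
    linearized p e a (x - y) = linearized p e a x - linearized p e a y := by
  simp only [linearized, ← sum_sub_distrib, sub_pow_char_pow, mul_sub]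

lemma linearized_pow [Fact p.Prime] [CharP K p] (x : K) :
    linearized p e a x ^ p = linearized p e (fun i => a i ^ p) (x ^ p) := by
  simp only [linearized, sum_pow_char, mul_pow, ← pow_mul, mul_comm p]

lemma coeff_linearizedPoly_pow (hp : 1 < p) {i : ℕ} (hi : i ≤ e) :
    (linearizedPoly p e a).coeff (p ^ i) = a i := by
  rw [linearizedPoly, finsetSum_coeff, sum_eq_single_of_mem i (mem_range.2 (by omega))]
  · simp
  · intro j _ hji
    rw [coeff_C_mul, coeff_X_pow, if_neg ((Nat.pow_right_injective hp).ne hji).symm, mul_zero]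

lemma coeff_linearizedPoly_zero (hp : p ≠ 0) : (linearizedPoly p e a).coeff 0 = 0 := by
  rw [linearizedPoly, finsetSum_coeff]
  exact sum_eq_zero fun j _ => by simp [coeff_X_pow, (pow_ne_zero j hp).symm]

lemma derivative_linearizedPoly [CharP K p] : derivative (linearizedPoly p e a) = C (a 0) := by
  rw [linearizedPoly, derivative_sum, sum_eq_single_of_mem 0 (mem_range.2 e.succ_pos)]
  · simp
  · intro j _ hj
    rw [derivative_C_mul_X_pow, Nat.cast_pow, CharP.cast_eq_zero K p, zero_pow hj, mul_zero, C_0,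
      zero_mul]

lemma separable_linearizedPoly_sub_C [CharP K p] (ha0 : a 0 ≠ 0) (c : K) :
    (linearizedPoly p e a - C c).Separable := by
  refine ⟨0, C (a 0)⁻¹, ?_⟩
  rw [derivative_sub, derivative_C, sub_zero, derivative_linearizedPoly, zero_mul, zero_add,
    ← C_mul, inv_mul_cancel₀ ha0, C_1]

end Linearized

namespace AddValuation

variable {K : Type*} [Field K] {Γ : Type*} [AddCommGroup Γ] [LinearOrder Γ] [IsOrderedAddMonoid Γ]
  (v : AddValuation K (WithTop Γ)) {p e : ℕ} {a : ℕ → K}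

lemma le_map_linearized {x : K} {g : WithTop Γ}
    (h : ∀ i ∈ range (e + 1), g ≤ p ^ i • v x + v (a i)) : g ≤ v (linearized p e a x) :=
  v.map_le_sum fun i hi => by rw [v.map_mul, v.map_pow, add_comm]; exact h i hi

lemma exists_linearized_eq_of_le [CharP K p] [IsSepClosed K] (hp : p.Prime) (ha0 : a 0 ≠ 0)
    {c : K} {i : ℕ} (hi : i ≤ e) {μ : Γ}
    (h : p ^ i • (μ : WithTop Γ) + v (a i) ≤ v c) :
    ∃ η, linearized p e a η = c ∧ (μ : WithTop Γ) ≤ v η := by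
  rcases eq_or_ne c 0 with rfl | hc
  · exact ⟨0, linearized_zero e a hp.ne_zero, by simp⟩
  set F := linearizedPoly p e a - C c
  have hF0 : F.coeff 0 = -c := by simp [F, coeff_linearizedPoly_zero e a hp.ne_zero]
  have hFi : F.coeff (p ^ i) = a i := by
    rw [coeff_sub, coeff_C_of_ne_zero (pow_ne_zero i hp.ne_zero), sub_zero,
      coeff_linearizedPoly_pow e a hp.one_lt hi]
  obtain ⟨η, hη, hvη⟩ := v.exists_mem_roots_le_map_of_splits
    (IsSepClosed.splits_of_separable F (separable_linearizedPoly_sub_C e a ha0 c))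
    (by rw [hF0]; exact neg_ne_zero.2 hc) (pow_pos hp.pos i) (by rwa [hF0, hFi, v.map_neg])
  refine ⟨η, ?_, hvη⟩
  have hroot := (mem_roots'.1 hη).2
  rwa [IsRoot, eval_sub, eval_C, eval_linearizedPoly, sub_eq_zero] at hroot

lemma min_inf_le_map_linearized_sub_of_le [Fact p.Prime] [CharP K p] {u b₁ b₂ : K} {μ₁ μ₂ : Γ}
    (h₁ : (μ₁ : WithTop Γ) ≤ v (u ^ p - b₁)) (h₂ : (μ₂ : WithTop Γ) ≤ v (linearized p e a u - b₂)) :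
    min ((range (e + 1)).inf fun i => p ^ i • (μ₁ : WithTop Γ) + p • v (a i))
        (p • (μ₂ : WithTop Γ)) ≤
      v (linearized p e (fun i => a i ^ p) b₁ - b₂ ^ p) := by
  have key : linearized p e (fun i => a i ^ p) b₁ - b₂ ^ p =
      (linearized p e a u - b₂) ^ p - linearized p e (fun i => a i ^ p) (u ^ p - b₁) := by
    rw [sub_pow_char, linearized_pow, linearized_sub]
    ring
  rw [key]
  refine v.map_le_sub ((min_le_right _ _).trans ?_)
    ((min_le_left _ _).trans (v.le_map_linearized fun i hi => (inf_le hi).trans ?_))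
  · rw [v.map_pow]
    exact nsmul_le_nsmul_right h₂ p
  · rw [v.map_pow]
    gcongr

lemma exists_approx_of_min_inf_le [Fact p.Prime] [CharP K p] [IsSepClosed K] (ha0 : a 0 ≠ 0)
    {b₁ c : K} {μ₁ : Γ} {ν : WithTop Γ}
    (h : min ((range (e + 1)).inf fun i => p ^ i • (μ₁ : WithTop Γ) + p • v (a i)) ν ≤
      v (linearized p e (fun i => a i ^ p) b₁ - c)) :
    ∃ w, (μ₁ : WithTop Γ) ≤ v (w - b₁) ∧ ν ≤ v (linearized p e (fun i => a i ^ p) w - c) := by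
  rcases min_le_iff.1 h with h | h
  · obtain ⟨i, hi, hinf⟩ := exists_mem_eq_inf (range (e + 1)) nonempty_range_add_one
      fun i => p ^ i • (μ₁ : WithTop Γ) + p • v (a i)
    have hbound : p ^ i • (μ₁ : WithTop Γ) + v (a i ^ p) ≤
        v (c - linearized p e (fun i => a i ^ p) b₁) := by
      rwa [v.map_pow, v.map_sub_swap, ← hinf]
    obtain ⟨η, hη, hvη⟩ := v.exists_linearized_eq_of_le (a := fun i => a i ^ p) (Fact.out : p.Prime)
      (pow_ne_zero p ha0) (mem_range_succ_iff.1 hi) hbound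
    refine ⟨b₁ + η, by rwa [add_sub_cancel_left], ?_⟩
    rw [linearized_add, hη, add_sub_cancel, sub_self, v.map_zero]
    exact le_top
  · exact ⟨b₁, by simp, h⟩

lemma exists_solution_of_approx [Fact p.Prime] [CharP K p] [IsSepClosed K]
    (hv : ∀ γ : Γ, ∃ x, v x = γ) (ha : ∀ i ≤ e, 0 ≤ v (a i)) {w b₁ b₂ : K} {μ₁ μ₂ : Γ}
    (hw₁ : (μ₁ : WithTop Γ) ≤ v (w - b₁))
    (hw₂ : p • (μ₂ : WithTop Γ) ≤ v (linearized p e (fun i => a i ^ p) w - b₂ ^ p)) :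
    ∃ u, (μ₁ : WithTop Γ) ≤ v (u ^ p - b₁) ∧ (μ₂ : WithTop Γ) ≤ v (linearized p e a u - b₂) := by
  have hp : p.Prime := Fact.out
  obtain ⟨z, hz⟩ := v.exists_le_map_pow_sub hp hv w (max 0 (max μ₁ (p • μ₂)))
  have hz₀ : 0 ≤ v (z ^ p - w) := (WithTop.coe_le_coe.2 (le_max_left _ _)).trans hz
  have hz₁ : (μ₁ : WithTop Γ) ≤ v (z ^ p - w) :=
    (WithTop.coe_le_coe.2 ((le_max_left _ _).trans (le_max_right _ _))).trans hz
  have hz₂ : p • (μ₂ : WithTop Γ) ≤ v (z ^ p - w) := by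
    rw [← WithTop.coe_nsmul]
    exact (WithTop.coe_le_coe.2 ((le_max_right _ _).trans (le_max_right _ _))).trans hz
  refine ⟨z, ?_, WithTop.coe_le_of_nsmul_le_nsmul hp.ne_zero ?_⟩
  · rw [← sub_add_sub_cancel _ w]
    exact v.map_le_add hz₁ hw₁
  · have hM : p • (μ₂ : WithTop Γ) ≤ v (linearized p e (fun i => a i ^ p) (z ^ p - w)) := by
      refine v.le_map_linearized fun i hi => hz₂.trans ?_
      rw [v.map_pow]
      refine le_add_of_le_of_nonneg (le_smul_of_one_le_left hz₀ (Nat.one_le_pow _ _ hp.pos)) ?_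
      exact nsmul_nonneg (ha i (mem_range_succ_iff.1 hi)) p
    rw [← v.map_pow, sub_pow_char, linearized_pow,
      ← sub_add_sub_cancel _ (linearized p e (fun i => a i ^ p) w), ← linearized_sub]
    exact v.map_le_add hM hw₂

end AddValuation

theorem stmt_13_general (p : ℕ) (hp : p.Prime) (K : Type*) [Field K] [CharP K p] [IsSepClosed K]
    (Γ : Type*) [AddCommGroup Γ] [LinearOrder Γ] [IsOrderedAddMonoid Γ] (vf : ValuedFieldAux K Γ)
    (e : ℕ) (a : ℕ → K) (ha : ∀ i ≤ e, 0 ≤ vf.v (a i)) (ha0 : a 0 ≠ 0)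
    (b₁ b₂ : K) (μ₁ μ₂ : Γ) :
    (∃ u : K, (μ₁ : WithTop Γ) ≤ vf.v (u ^ p - b₁) ∧
        (μ₂ : WithTop Γ) ≤ vf.v ((∑ i ∈ Finset.range (e + 1), a i * u ^ (p ^ i)) - b₂)) ↔
      min
        ((Finset.range (e + 1)).inf
          (fun i => p ^ i • (μ₁ : WithTop Γ) + p • vf.v (a i)))
        (p • (μ₂ : WithTop Γ)) ≤
      vf.v ((∑ i ∈ Finset.range (e + 1), (a i) ^ p * b₁ ^ (p ^ i)) - b₂ ^ p) := by
  have : Fact p.Prime := ⟨hp⟩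
  let v := vf.toAddValuation
  constructor
  · rintro ⟨u, h₁, h₂⟩
    exact v.min_inf_le_map_linearized_sub_of_le (u := u) h₁ h₂
  · intro h
    obtain ⟨w, hw₁, hw₂⟩ := v.exists_approx_of_min_inf_le ha0 h
    exact v.exists_solution_of_approx vf.v_surj ha hw₁ hw₂

/-- Let `(K, v)` be a separably closed valued field of characteristic
`p > 0`. Let `a_0, …, a_e ∈ O` with `a_0 ≠ 0` and `min_i v(a_i) = 0`, `b₁, b₂ ∈ K`,
`μ₁, μ₂ ∈ Γ`. Then the system `v(u^p − b₁) ≥ μ₁`, `v(∑ a_i·u^{p^i} − b₂) ≥ μ₂` has a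
solution `u ∈ K` iff
`v(∑ a_i^p·b₁^{p^i} − b₂^p) ≥ min(min_{i : a_i ≠ 0}(p^i·μ₁ + p·v(a_i)), p·μ₂)`.
(Terms with `a_i = 0` give `v (a i) = ⊤` and do not contribute to the `inf`.) -/
theorem stmt_13 (p : ℕ) (hp : p.Prime) (K : Type*) [Field K] [CharP K p] [IsSepClosed K]
    (Γ : Type*) [AddCommGroup Γ] [LinearOrder Γ] [IsOrderedAddMonoid Γ] (vf : ValuedFieldAux K Γ)
    (e : ℕ) (a : ℕ → K) (ha : ∀ i ≤ e, 0 ≤ vf.v (a i)) (ha0 : a 0 ≠ 0)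
    (hamin : (Finset.range (e + 1)).inf (fun i => vf.v (a i)) = 0)
    (b₁ b₂ : K) (μ₁ μ₂ : Γ) :
    (∃ u : K, (μ₁ : WithTop Γ) ≤ vf.v (u ^ p - b₁) ∧
        (μ₂ : WithTop Γ) ≤ vf.v ((∑ i ∈ Finset.range (e + 1), a i * u ^ (p ^ i)) - b₂)) ↔
      min
        ((Finset.range (e + 1)).inf
          (fun i => p ^ i • (μ₁ : WithTop Γ) + p • vf.v (a i)))
        (p • (μ₂ : WithTop Γ)) ≤
      vf.v ((∑ i ∈ Finset.range (e + 1), (a i) ^ p * b₁ ^ (p ^ i)) - b₂ ^ p) :=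
  stmt_13_general p hp K Γ vf e a ha ha0 b₁ b₂ μ₁ μ₂
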